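/- Correctness of the perturbed affine-function circuit: Let n ≥ 1 and let each of p¹, p², a, g¹, g² be given by bits (·)_i^+, (·)_i^− ∈ {0,1} for i = 1, …, n, each with either all plus-bits zero or all minus-bits zero, encoding the real values Dec(·) := Σ_i (·)_i^+/2^i − Σ_i (·)_i^−/2^i. Let x₁, x₂ ∈ ℝ with x₁ − Dec(p¹) ∈ [−2, 2] and x₂ − Dec(p²) ∈ [−2, 2], and let all perturbations lie in (−1, 1). Define Affine := CTB(x₁ − Dec(p¹), g¹) + CTB(x₂ − Dec(p²), g²) + Dec(a), where each CTB is the perturbed bit-multiplication sum CTB(u, y) = Σ_{i=1}^n (1/2^i)·BM(u, y_i^+; π_i^+) − Σ_{i=1}^n (1/2^i)·BM(u, y_i^−; π_i^−) with BM(u, b; π) = 4·(1−b) + max(−4, u − 8·(1−b) + π), using its own perturbations. Then Affine = (x₁ − Dec(p¹))·Dec(g¹) + (x₂ − Dec(p²))·Dec(g²) + Dec(a) + σ for some σ ∈ ℝ with |σ| ≤ 2·(maximum absolute value over all perturbations used). -/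

import Mathlib

/-- The perturbed bit-multiplication gadget: `BM(x, b; π) = 4(1−b) + max(−4, x − 8(1−b) + π)`. -/
noncomputable def BM (x b π : ℝ) : ℝ := 4 * (1 - b) + max (-4) (x - 8 * (1 - b) + π)

/-- The perturbed continuous-times-binary circuit. -/
noncomputable def CTB (n : ℕ) (x : ℝ) (yp ym πp πm : ℕ → ℝ) : ℝ :=
  (∑ i ∈ Finset.Icc 1 n, (1 / 2 ^ i : ℝ) * BM x (yp i) (πp i))
    - ∑ i ∈ Finset.Icc 1 n, (1 / 2 ^ i : ℝ) * BM x (ym i) (πm i)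

/-- Decoding of a (signed) binary encoding: `Dec(b) = Σ bp_i/2^i − Σ bm_i/2^i`. -/
noncomputable def Dec (n : ℕ) (bp bm : ℕ → ℝ) : ℝ :=
  (∑ i ∈ Finset.Icc 1 n, bp i / 2 ^ i) - ∑ i ∈ Finset.Icc 1 n, bm i / 2 ^ i

/-- A pair of bit-vectors is a good signed binary encoding: all bits are in {0,1} and
either all minus-bits are zero or all plus-bits are zero. -/
def GoodBin (n : ℕ) (bp bm : ℕ → ℝ) : Prop :=
  (∀ i, 1 ≤ i → i ≤ n → (bp i = 0 ∨ bp i = 1) ∧ (bm i = 0 ∨ bm i = 1)) ∧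
  ((∀ i, 1 ≤ i → i ≤ n → bm i = 0) ∨ (∀ i, 1 ≤ i → i ≤ n → bp i = 0))

/-!
For `x ∈ [-2, 2]` and `π ∈ (-1, 1)` the `max` in `BM x b π` takes a known branch: the constant
`-4` when `b = 0` (as `x + π ≤ 4`) and `x + π` when `b = 1` (as `x + π ≥ -4`), so
`BM x b π = (x + π) * b` exactly. Hence `CTB` computes `x * Dec(y)` plus the error
`Dec(π ⊙ y)`, and since only one sign of `y` is populated this error is a single sum
`± Σ π_i y_i / 2^i`, bounded by `M · Σ 2^{-i} ≤ M`. Each of the two circuits contributes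
at most `M`.
-/

open Finset

lemma BM_eq_mul_of_abs_le {x b π : ℝ} (hb : b = 0 ∨ b = 1) (h : |x + π| ≤ 4) :
    BM x b π = (x + π) * b := by
  obtain ⟨hlo, hhi⟩ := abs_le.mp h
  rcases hb with rfl | rfl <;> unfold BM
  · rw [max_eq_left (by linarith)]; ring
  · rw [max_eq_right (by linarith)]; ring

lemma sum_Icc_one_div_two_pow (n : ℕ) : ∑ i ∈ Icc 1 n, (1 / 2 ^ i : ℝ) = 1 - 1 / 2 ^ n := by
  induction n with
  | zero => simp
  | succ n ih =>
    rw [sum_Icc_succ_top (Nat.le_add_left 1 n), ih]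
    field_simp
    ring

lemma abs_sum_Icc_div_two_pow_le {n : ℕ} {c : ℕ → ℝ} {M : ℝ} (hM : 0 ≤ M)
    (hc : ∀ i, 1 ≤ i → i ≤ n → |c i| ≤ M) : |∑ i ∈ Icc 1 n, c i / 2 ^ i| ≤ M :=
  calc |∑ i ∈ Icc 1 n, c i / 2 ^ i|
      ≤ ∑ i ∈ Icc 1 n, |c i / 2 ^ i| := abs_sum_le_sum_abs _ _
    _ ≤ ∑ i ∈ Icc 1 n, M * (1 / 2 ^ i) := by
        refine sum_le_sum fun i hi => ?_
        obtain ⟨h1, h2⟩ := mem_Icc.mp hi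
        rw [abs_div, abs_of_pos (by positivity : (0 : ℝ) < 2 ^ i), ← div_eq_mul_one_div]
        gcongr
        exact hc i h1 h2
    _ = M * (1 - 1 / 2 ^ n) := by rw [← mul_sum, sum_Icc_one_div_two_pow]
    _ ≤ M := mul_le_of_le_one_right hM (sub_le_self _ (by positivity))

lemma abs_Dec_le {n : ℕ} {bp bm : ℕ → ℝ} {M : ℝ} (hM : 0 ≤ M)
    (hp : ∀ i, 1 ≤ i → i ≤ n → |bp i| ≤ M) (hm : ∀ i, 1 ≤ i → i ≤ n → |bm i| ≤ M)
    (hsign : (∀ i, 1 ≤ i → i ≤ n → bm i = 0) ∨ (∀ i, 1 ≤ i → i ≤ n → bp i = 0)) :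
    |Dec n bp bm| ≤ M := by
  have sum_zero {b : ℕ → ℝ} (hb : ∀ i, 1 ≤ i → i ≤ n → b i = 0) :
      ∑ i ∈ Icc 1 n, b i / 2 ^ i = 0 :=
    sum_eq_zero fun i hi => by rw [hb i (mem_Icc.mp hi).1 (mem_Icc.mp hi).2, zero_div]
  unfold Dec
  rcases hsign with hsign | hsign
  · rw [sum_zero hsign, sub_zero]
    exact abs_sum_Icc_div_two_pow_le hM hp
  · rw [sum_zero hsign, zero_sub, abs_neg]
    exact abs_sum_Icc_div_two_pow_le hM hm

lemma CTB_eq_mul_Dec_add {n : ℕ} {x : ℝ} {yp ym πp πm : ℕ → ℝ}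
    (hy : ∀ i, 1 ≤ i → i ≤ n → (yp i = 0 ∨ yp i = 1) ∧ (ym i = 0 ∨ ym i = 1))
    (hxπ : ∀ i, 1 ≤ i → i ≤ n → |x + πp i| ≤ 4 ∧ |x + πm i| ≤ 4) :
    CTB n x yp ym πp πm
      = x * Dec n yp ym + Dec n (fun i => πp i * yp i) (fun i => πm i * ym i) := by
  have term {y π : ℕ → ℝ} (h : ∀ i, 1 ≤ i → i ≤ n → (y i = 0 ∨ y i = 1) ∧ |x + π i| ≤ 4) :
      ∑ i ∈ Icc 1 n, (1 / 2 ^ i : ℝ) * BM x (y i) (π i)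
        = x * ∑ i ∈ Icc 1 n, y i / 2 ^ i + ∑ i ∈ Icc 1 n, π i * y i / 2 ^ i := by
    rw [mul_sum, ← sum_add_distrib]
    refine sum_congr rfl fun i hi => ?_
    obtain ⟨hb, hxπ⟩ := h i (mem_Icc.mp hi).1 (mem_Icc.mp hi).2
    rw [BM_eq_mul_of_abs_le hb hxπ]
    ring
  unfold CTB Dec
  rw [term fun i h1 h2 => ⟨(hy i h1 h2).1, (hxπ i h1 h2).1⟩,
    term fun i h1 h2 => ⟨(hy i h1 h2).2, (hxπ i h1 h2).2⟩]
  ring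

lemma abs_add_le_four {x π : ℝ} (hx : x ∈ Set.Icc (-2 : ℝ) 2) (hπ : π ∈ Set.Ioo (-1 : ℝ) 1) :
    |x + π| ≤ 4 :=
  abs_le.mpr ⟨by linarith [hx.1, hπ.1], by linarith [hx.2, hπ.2]⟩

lemma abs_mul_bit_le {π y M : ℝ} (hπ : |π| ≤ M) (hy : y = 0 ∨ y = 1) : |π * y| ≤ M := by
  rcases hy with rfl | rfl
  · simpa using (abs_nonneg π).trans hπ
  · simpa using hπ

lemma CTB_correct {n : ℕ} {x M : ℝ} {yp ym πp πm : ℕ → ℝ} (hM : 0 ≤ M)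
    (hy : GoodBin n yp ym) (hx : x ∈ Set.Icc (-2 : ℝ) 2)
    (hπ : ∀ i, 1 ≤ i → i ≤ n → πp i ∈ Set.Ioo (-1 : ℝ) 1 ∧ πm i ∈ Set.Ioo (-1 : ℝ) 1)
    (hπM : ∀ i, 1 ≤ i → i ≤ n → |πp i| ≤ M ∧ |πm i| ≤ M) :
    ∃ σ : ℝ, CTB n x yp ym πp πm = x * Dec n yp ym + σ ∧ |σ| ≤ M := by
  obtain ⟨hbits, hsign⟩ := hy
  refine ⟨_, CTB_eq_mul_Dec_add hbits fun i h1 h2 =>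
    ⟨abs_add_le_four hx (hπ i h1 h2).1, abs_add_le_four hx (hπ i h1 h2).2⟩, ?_⟩
  refine abs_Dec_le hM (fun i h1 h2 => abs_mul_bit_le (hπM i h1 h2).1 (hbits i h1 h2).1)
    (fun i h1 h2 => abs_mul_bit_le (hπM i h1 h2).2 (hbits i h1 h2).2) ?_
  refine hsign.imp (fun h i h1 h2 => ?_) (fun h i h1 h2 => ?_) <;> simp [h i h1 h2]

theorem affine_correct_general (n : ℕ) (hn : 1 ≤ n)
    (p1p p1m p2p p2m aP aM g1p g1m g2p g2m : ℕ → ℝ)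
    (hg1 : GoodBin n g1p g1m) (hg2 : GoodBin n g2p g2m)
    (x1 x2 : ℝ)
    (hx1 : x1 - Dec n p1p p1m ∈ Set.Icc (-2 : ℝ) 2)
    (hx2 : x2 - Dec n p2p p2m ∈ Set.Icc (-2 : ℝ) 2)
    (π1p π1m π2p π2m : ℕ → ℝ)
    (hπ : ∀ i, 1 ≤ i → i ≤ n →
      π1p i ∈ Set.Ioo (-1 : ℝ) 1 ∧ π1m i ∈ Set.Ioo (-1 : ℝ) 1 ∧
      π2p i ∈ Set.Ioo (-1 : ℝ) 1 ∧ π2m i ∈ Set.Ioo (-1 : ℝ) 1)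
    (M : ℝ)
    (hM : ∀ i, 1 ≤ i → i ≤ n → |π1p i| ≤ M ∧ |π1m i| ≤ M ∧ |π2p i| ≤ M ∧ |π2m i| ≤ M) :
    ∃ σ : ℝ,
      CTB n (x1 - Dec n p1p p1m) g1p g1m π1p π1m
        + CTB n (x2 - Dec n p2p p2m) g2p g2m π2p π2m
        + Dec n aP aM
      = (x1 - Dec n p1p p1m) * Dec n g1p g1m + (x2 - Dec n p2p p2m) * Dec n g2p g2m
          + Dec n aP aM + σ
      ∧ |σ| ≤ 2 * M := by
  have hM0 : 0 ≤ M := (abs_nonneg _).trans (hM 1 le_rfl hn).1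
  obtain ⟨σ1, e1, b1⟩ := CTB_correct hM0 hg1 hx1
    (fun i h1 h2 => ⟨(hπ i h1 h2).1, (hπ i h1 h2).2.1⟩)
    (fun i h1 h2 => ⟨(hM i h1 h2).1, (hM i h1 h2).2.1⟩)
  obtain ⟨σ2, e2, b2⟩ := CTB_correct hM0 hg2 hx2
    (fun i h1 h2 => ⟨(hπ i h1 h2).2.2.1, (hπ i h1 h2).2.2.2⟩)
    (fun i h1 h2 => ⟨(hM i h1 h2).2.2.1, (hM i h1 h2).2.2.2⟩)
  refine ⟨σ1 + σ2, by rw [e1, e2]; ring, ?_⟩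
  calc |σ1 + σ2| ≤ |σ1| + |σ2| := abs_add_le σ1 σ2
    _ ≤ 2 * M := by linarith

/-- Correctness of the perturbed affine-function circuit. -/
theorem affine_correct (n : ℕ) (hn : 1 ≤ n)
    (p1p p1m p2p p2m aP aM g1p g1m g2p g2m : ℕ → ℝ)
    (hp1 : GoodBin n p1p p1m) (hp2 : GoodBin n p2p p2m) (ha : GoodBin n aP aM)
    (hg1 : GoodBin n g1p g1m) (hg2 : GoodBin n g2p g2m)
    (x1 x2 : ℝ)
    (hx1 : x1 - Dec n p1p p1m ∈ Set.Icc (-2 : ℝ) 2)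
    (hx2 : x2 - Dec n p2p p2m ∈ Set.Icc (-2 : ℝ) 2)
    (π1p π1m π2p π2m : ℕ → ℝ)
    (hπ : ∀ i, 1 ≤ i → i ≤ n →
      π1p i ∈ Set.Ioo (-1 : ℝ) 1 ∧ π1m i ∈ Set.Ioo (-1 : ℝ) 1 ∧
      π2p i ∈ Set.Ioo (-1 : ℝ) 1 ∧ π2m i ∈ Set.Ioo (-1 : ℝ) 1)
    (M : ℝ)
    (hM : ∀ i, 1 ≤ i → i ≤ n → |π1p i| ≤ M ∧ |π1m i| ≤ M ∧ |π2p i| ≤ M ∧ |π2m i| ≤ M) :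
    ∃ σ : ℝ,
      CTB n (x1 - Dec n p1p p1m) g1p g1m π1p π1m
        + CTB n (x2 - Dec n p2p p2m) g2p g2m π2p π2m
        + Dec n aP aM
      = (x1 - Dec n p1p p1m) * Dec n g1p g1m + (x2 - Dec n p2p p2m) * Dec n g2p g2m
          + Dec n aP aM + σ
      ∧ |σ| ≤ 2 * M :=
  affine_correct_general n hn p1p p1m p2p p2m aP aM g1p g1m g2p g2m hg1 hg2 x1 x2 hx1 hx2 π1p π1m
    π2p π2m hπ M hM
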